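/- arXiv:2603.19189 — 8 statements merged into one kernel-verified Lean document; each statement's English description precedes it below -/
import Mathlib

section
/- Let d, χ be positive integers, A : Fin d → Matrix (Fin χ) (Fin χ) ℂ a left-canonical MPS tensor with right fixed point ρ, and U ∈ Matrix (Fin d) (Fin d) ℂ unitary. If v, w ∈ Matrix (Fin χ) (Fin χ) ℂ satisfy ‖v‖_ρ = 1 and ‖w‖_ρ = 1, and λ ∈ ℂ satisfies T_U(v) = λ • w, then |λ| ≤ 1. -/
open Matrix BigOperators
open scoped ComplexOrder

/-- The ρ-weighted norm on χ×χ complex matrices: `‖v‖_ρ = √(Tr(vᴴ * v * ρ))`. -/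
noncomputable def rhoNorm {χ : ℕ} (ρ v : Matrix (Fin χ) (Fin χ) ℂ) : ℝ :=
  Real.sqrt ((vᴴ * v * ρ).trace.re)

/-- The `U`-transfer map `T_U(v) = ∑_{s,t} U s t • ((A s)ᴴ * v * (A t))`. -/
noncomputable def transferMap {d χ : ℕ} (A : Fin d → Matrix (Fin χ) (Fin χ) ℂ)
    (U : Matrix (Fin d) (Fin d) ℂ) (v : Matrix (Fin χ) (Fin χ) ℂ) :
    Matrix (Fin χ) (Fin χ) ℂ :=
  ∑ s, ∑ t, (U s t) • ((A s)ᴴ * v * (A t))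

/-!
Equip matrices with the inner product `⟪x, y⟫ = Tr(y ρ xᴴ)` of `Matrix.toMatrixInnerProductSpace`,
whose norm is `rhoNorm ρ`. Then `λ = ⟪w, T_U v⟫ = ∑ s, ⟪A s * w, ∑ t, U s t • (v * A t)⟫` is the
inner product in `ℓ²(Fin d)` of two families of matrices. The first has norm `‖w‖ = 1` because
`∑ s, (A s)ᴴ * A s = 1`; the second is `U` applied to `(v * A t)_t`, so it has the norm of that
family, which is `‖v‖ = 1` because `∑ t, A t * ρ * (A t)ᴴ = ρ`. Cauchy–Schwarz gives `‖λ‖ ≤ 1`.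
-/

open scoped InnerProductSpace
open WithLp

section UnitaryMixing

variable {𝕜 ι E : Type*} [RCLike 𝕜] [Fintype ι] [DecidableEq ι]
  [NormedAddCommGroup E] [InnerProductSpace 𝕜 E] {U : Matrix ι ι 𝕜}

theorem Matrix.sum_inner_sum_smul_of_mem_unitaryGroup (hU : U ∈ unitaryGroup ι 𝕜)
    (x y : ι → E) :
    ∑ s, ⟪∑ t, U s t • x t, ∑ t, U s t • y t⟫_𝕜 = ∑ t, ⟪x t, y t⟫_𝕜 := by
  have hUU : ∀ t t', ∑ s, star (U s t) * U s t' = (1 : Matrix ι ι 𝕜) t t' := fun t t' => by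
    rw [← (mem_unitaryGroup_iff').mp hU, mul_apply]; rfl
  simp only [sum_inner, inner_sum, inner_smul_left, inner_smul_right, Finset.mul_sum,
    ← mul_assoc]
  rw [Finset.sum_comm]
  refine Finset.sum_congr rfl fun t' _ => ?_
  rw [Finset.sum_comm]
  simp_rw [← Finset.sum_mul, mul_comm (U _ t'), starRingEnd_apply, hUU, one_apply, ite_mul,
    one_mul, zero_mul]
  simp

theorem Matrix.norm_toLp_sum_smul_of_mem_unitaryGroup (hU : U ∈ unitaryGroup ι 𝕜)
    (x : ι → E) :
    ‖(toLp 2 fun s => ∑ t, U s t • x t : PiLp 2 fun _ : ι => E)‖ =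
      ‖(toLp 2 x : PiLp 2 fun _ : ι => E)‖ := by
  rw [norm_eq_sqrt_re_inner (𝕜 := 𝕜), norm_eq_sqrt_re_inner (𝕜 := 𝕜), PiLp.inner_apply,
    PiLp.inner_apply]
  exact congrArg _ (congrArg _ (sum_inner_sum_smul_of_mem_unitaryGroup hU x x))

end UnitaryMixing

section WeightedTrace

variable {ι n : Type*} [Fintype ι] [Fintype n] (ρ : Matrix n n ℂ)

theorem Matrix.sum_trace_mul_mul_conjTranspose_of_sum_conjTranspose_mul_self [DecidableEq n]
    {A : ι → Matrix n n ℂ} (hA : ∑ s, (A s)ᴴ * A s = 1) (x : Matrix n n ℂ) :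
    ∑ s, (A s * x * ρ * (A s * x)ᴴ).trace = (x * ρ * xᴴ).trace := by
  calc ∑ s, (A s * x * ρ * (A s * x)ᴴ).trace
      = ∑ s, ((A s)ᴴ * A s * (x * ρ * xᴴ)).trace := by
        refine Finset.sum_congr rfl fun s _ => ?_
        rw [conjTranspose_mul, ← mul_assoc, trace_mul_comm]
        simp only [mul_assoc]
    _ = (x * ρ * xᴴ).trace := by rw [← trace_sum, ← Finset.sum_mul, hA, one_mul]

theorem Matrix.sum_trace_mul_mul_conjTranspose_of_sum_mul_mul_conjTranspose
    {A : ι → Matrix n n ℂ} (hfix : ∑ s, A s * ρ * (A s)ᴴ = ρ) (x : Matrix n n ℂ) :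
    ∑ s, (x * A s * ρ * (x * A s)ᴴ).trace = (x * ρ * xᴴ).trace := by
  calc ∑ s, (x * A s * ρ * (x * A s)ᴴ).trace = ∑ s, (x * (A s * ρ * (A s)ᴴ) * xᴴ).trace := by
        simp only [conjTranspose_mul, mul_assoc]
    _ = (x * ρ * xᴴ).trace := by rw [← trace_sum, ← Finset.sum_mul, ← Finset.mul_sum, hfix]

end WeightedTrace

theorem rhoNorm_eq_sqrt_re_trace {χ : ℕ} (ρ v : Matrix (Fin χ) (Fin χ) ℂ) :
    rhoNorm ρ v = √((v * ρ * vᴴ).trace.re) := by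
  rw [rhoNorm, ← trace_mul_cycle]

theorem trace_transferMap_mul_mul_conjTranspose {d χ : ℕ} (A : Fin d → Matrix (Fin χ) (Fin χ) ℂ)
    (U : Matrix (Fin d) (Fin d) ℂ) (ρ v w : Matrix (Fin χ) (Fin χ) ℂ) :
    (transferMap A U v * ρ * wᴴ).trace =
      ∑ s, ((∑ t, U s t • (v * A t)) * ρ * (A s * w)ᴴ).trace := by
  simp only [transferMap, Finset.sum_mul, trace_sum, smul_mul, trace_smul]
  refine Finset.sum_congr rfl fun s _ => Finset.sum_congr rfl fun t _ => ?_
  rw [conjTranspose_mul, ← mul_assoc, trace_mul_comm _ (A s)ᴴ]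
  simp only [mul_assoc]

theorem transfer_eigenvalue_bound_general {d χ : ℕ}
    (A : Fin d → Matrix (Fin χ) (Fin χ) ℂ)
    (hA : ∑ s, (A s)ᴴ * (A s) = 1)
    (ρ : Matrix (Fin χ) (Fin χ) ℂ) (hρ : ρ.PosDef)
    (hfix : ∑ s, A s * ρ * (A s)ᴴ = ρ)
    (U : Matrix (Fin d) (Fin d) ℂ) (hU : U ∈ Matrix.unitaryGroup (Fin d) ℂ)
    (v w : Matrix (Fin χ) (Fin χ) ℂ)
    (hv : rhoNorm ρ v = 1) (hw : rhoNorm ρ w = 1)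
    (lam : ℂ) (hlam : transferMap A U v = lam • w) :
    ‖lam‖ ≤ 1 := by
  let _ : NormedAddCommGroup (Matrix (Fin χ) (Fin χ) ℂ) := ρ.toMatrixNormedAddCommGroup hρ
  let _ : InnerProductSpace ℂ (Matrix (Fin χ) (Fin χ) ℂ) :=
    ρ.toMatrixInnerProductSpace hρ.posSemidef
  have norm_toLp (y : Fin d → Matrix (Fin χ) (Fin χ) ℂ) :
      ‖(toLp 2 y : PiLp 2 fun _ : Fin d => Matrix (Fin χ) (Fin χ) ℂ)‖ =
        √(∑ s, (y s * ρ * (y s)ᴴ).trace).re := by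
    rw [norm_eq_sqrt_re_inner (𝕜 := ℂ), PiLp.inner_apply]; rfl
  have hw' : ‖w‖ = 1 := (rhoNorm_eq_sqrt_re_trace ρ w).symm.trans hw
  let Y : PiLp 2 fun _ : Fin d => Matrix (Fin χ) (Fin χ) ℂ := toLp 2 fun s => A s * w
  let Z : PiLp 2 fun _ : Fin d => Matrix (Fin χ) (Fin χ) ℂ :=
    toLp 2 fun s => ∑ t, U s t • (v * A t)
  have hY : ‖Y‖ = 1 := by
    rw [norm_toLp, sum_trace_mul_mul_conjTranspose_of_sum_conjTranspose_mul_self ρ hA,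
      ← rhoNorm_eq_sqrt_re_trace, hw]
  have hZ : ‖Z‖ = 1 := by
    rw [norm_toLp_sum_smul_of_mem_unitaryGroup hU, norm_toLp,
      sum_trace_mul_mul_conjTranspose_of_sum_mul_mul_conjTranspose ρ hfix,
      ← rhoNorm_eq_sqrt_re_trace, hv]
  have hYZ : ⟪Y, Z⟫_ℂ = lam := by
    calc ⟪Y, Z⟫_ℂ = ⟪w, transferMap A U v⟫_ℂ :=
          (trace_transferMap_mul_mul_conjTranspose A U ρ v w).symm
      _ = lam := by rw [hlam, inner_smul_right, inner_self_eq_norm_sq_to_K, hw']; simp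
  calc ‖lam‖ = ‖⟪Y, Z⟫_ℂ‖ := by rw [hYZ]
    _ ≤ ‖Y‖ * ‖Z‖ := norm_inner_le_norm Y Z
    _ = 1 := by rw [hY, hZ, one_mul]

theorem transfer_eigenvalue_bound {d χ : ℕ} (hd : 0 < d) (hχ : 0 < χ)
    (A : Fin d → Matrix (Fin χ) (Fin χ) ℂ)
    (hA : ∑ s, (A s)ᴴ * (A s) = 1)
    (ρ : Matrix (Fin χ) (Fin χ) ℂ) (hρ : ρ.PosDef)
    (hfix : ∑ s, A s * ρ * (A s)ᴴ = ρ)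
    (U : Matrix (Fin d) (Fin d) ℂ) (hU : U ∈ Matrix.unitaryGroup (Fin d) ℂ)
    (v w : Matrix (Fin χ) (Fin χ) ℂ)
    (hv : rhoNorm ρ v = 1) (hw : rhoNorm ρ w = 1)
    (lam : ℂ) (hlam : transferMap A U v = lam • w) :
    ‖lam‖ ≤ 1 :=
  transfer_eigenvalue_bound_general A hA ρ hρ hfix U hU v w hv hw lam hlam
end

section
/- Let d, χ be positive integers, A : Fin d → Matrix (Fin χ) (Fin χ) ℂ a left-canonical MPS tensor with right fixed point ρ, and U ∈ Matrix (Fin d) (Fin d) ℂ unitary. Then the U-transfer map is a contraction for the ρ-weighted norm: for every v ∈ Matrix (Fin χ) (Fin χ) ℂ, ‖T_U(v)‖_ρ ≤ ‖v‖_ρ. -/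
open Matrix BigOperators
open scoped ComplexOrder

/-!
Stack the Kraus operators `A s` into one column `V`. Left-canonicity says `V` is an isometry,
and `T_U(v) = Vᴴ (U ⊗ v) V` is a compression of `U ⊗ v`. For a compression,
`(Vᴴ B V)ᴴ (Vᴴ B V) ≤ Vᴴ Bᴴ B V` (the gap is `Cᴴ C` with `C = (1 - V Vᴴ) B V`), and since `U` is
unitary, `Vᴴ (U ⊗ v)ᴴ (U ⊗ v) V = ∑ₜ (A t)ᴴ vᴴ v (A t)`. Pairing with `ρ` and moving the Kraus
operators onto `ρ` by cyclicity of the trace, the fixed-point equation turns the right-hand side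
into `Tr(vᴴ v ρ)`.
-/

open Kronecker

namespace Matrix

variable {R ι m n : Type*} [Fintype ι] [Fintype m]

def blockColumn (A : ι → Matrix m n R) : Matrix (ι × m) n R :=
  of fun p j => A p.1 p.2 j

theorem conjTranspose_blockColumn_mul_blockColumn [NonUnitalNonAssocSemiring R] [Star R]
    (A : ι → Matrix m n R) :
    (blockColumn A)ᴴ * blockColumn A = ∑ s, (A s)ᴴ * A s := by
  ext i j
  simp only [mul_apply, conjTranspose_apply, sum_apply, blockColumn, of_apply,
    Fintype.sum_prod_type]

theorem conjTranspose_blockColumn_mul_kronecker_mul_blockColumn [Fintype n] [CommSemiring R]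
    [Star R] (A : ι → Matrix m n R) (U : Matrix ι ι R) (M : Matrix m m R) :
    (blockColumn A)ᴴ * (U ⊗ₖ M) * blockColumn A =
      ∑ s, ∑ t, (U s t • ((A s)ᴴ * M * A t) : Matrix n n R) := by
  ext i j
  simp only [mul_apply, conjTranspose_apply, sum_apply, smul_apply, blockColumn, of_apply,
    kroneckerMap_apply, smul_eq_mul, Fintype.sum_prod_type, Finset.sum_mul, Finset.mul_sum]
  conv_lhs => enter [2, t]; rw [Finset.sum_comm]
  rw [Finset.sum_comm]
  refine Fintype.sum_congr _ _ fun s => Fintype.sum_congr _ _ fun t => ?_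
  refine Fintype.sum_congr _ _ fun l => Fintype.sum_congr _ _ fun k => ?_
  ring

theorem trace_sum_conjTranspose_mul_mul_mul [Fintype n] [CommSemiring R] [Star R]
    (A : ι → Matrix m n R) (M : Matrix m m R) (ρ : Matrix n n R) :
    (∑ t, (A t)ᴴ * M * A t * ρ).trace = (M * ∑ t, A t * ρ * (A t)ᴴ).trace := by
  simp only [trace_sum, Finset.mul_sum]
  refine Finset.sum_congr rfl fun t _ => ?_
  rw [Matrix.mul_assoc, Matrix.mul_assoc, trace_mul_comm, ← Matrix.mul_assoc,
    ← Matrix.mul_assoc, ← Matrix.mul_assoc]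

section Compression

variable {k : Type*} [Fintype n] [Fintype k]

theorem compression_gap_eq [Ring R] [StarRing R] [DecidableEq n] [DecidableEq k] {V : Matrix k n R} (hV : Vᴴ * V = 1) (B : Matrix k k R) :
    Vᴴ * (Bᴴ * B) * V - (Vᴴ * B * V)ᴴ * (Vᴴ * B * V) =
      ((1 - V * Vᴴ) * B * V)ᴴ * ((1 - V * Vᴴ) * B * V) := by
  have hQ : (1 - V * Vᴴ)ᴴ * (1 - V * Vᴴ) = 1 - V * Vᴴ := by
    simp only [conjTranspose_sub, conjTranspose_one, conjTranspose_mul,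
      conjTranspose_conjTranspose, Matrix.sub_mul, Matrix.mul_sub, Matrix.one_mul, Matrix.mul_one]
    rw [Matrix.mul_assoc, ← Matrix.mul_assoc Vᴴ, hV, Matrix.one_mul, sub_self, sub_zero]
  calc Vᴴ * (Bᴴ * B) * V - (Vᴴ * B * V)ᴴ * (Vᴴ * B * V)
      = (B * V)ᴴ * (1 - V * Vᴴ) * (B * V) := by
        simp only [conjTranspose_mul, conjTranspose_conjTranspose, Matrix.mul_sub,
          Matrix.sub_mul, Matrix.mul_one, Matrix.mul_assoc]
    _ = (B * V)ᴴ * ((1 - V * Vᴴ)ᴴ * (1 - V * Vᴴ)) * (B * V) := by rw [hQ]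
    _ = ((1 - V * Vᴴ) * B * V)ᴴ * ((1 - V * Vᴴ) * B * V) := by
        simp only [conjTranspose_mul, Matrix.mul_assoc]

theorem trace_conjTranspose_mul_self_mul_nonneg [CommRing R] [PartialOrder R] [StarRing R]
    [StarOrderedRing R] (C : Matrix k n R) {ρ : Matrix n n R}
    (hρ : ρ.PosSemidef) : 0 ≤ (Cᴴ * C * ρ).trace := by
  rw [Matrix.mul_assoc, trace_mul_comm]
  exact (hρ.mul_mul_conjTranspose_same C).trace_nonneg

theorem trace_compression_sq_mul_le [CommRing R] [PartialOrder R] [StarRing R]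
    [StarOrderedRing R] [DecidableEq n] [DecidableEq k] {V : Matrix k n R} (hV : Vᴴ * V = 1) (B : Matrix k k R)
    {ρ : Matrix n n R} (hρ : ρ.PosSemidef) :
    ((Vᴴ * B * V)ᴴ * (Vᴴ * B * V) * ρ).trace ≤ (Vᴴ * (Bᴴ * B) * V * ρ).trace := by
  rw [← sub_nonneg, ← trace_sub, ← Matrix.sub_mul, compression_gap_eq hV]
  exact trace_conjTranspose_mul_self_mul_nonneg _ hρ

end Compression

end Matrix

theorem transfer_contraction_general {d χ : ℕ}
    (A : Fin d → Matrix (Fin χ) (Fin χ) ℂ)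
    (hA : ∑ s, (A s)ᴴ * (A s) = 1)
    (ρ : Matrix (Fin χ) (Fin χ) ℂ) (hρ : ρ.PosDef)
    (hfix : ∑ s, A s * ρ * (A s)ᴴ = ρ)
    (U : Matrix (Fin d) (Fin d) ℂ) (hU : U ∈ Matrix.unitaryGroup (Fin d) ℂ) :
    ∀ v : Matrix (Fin χ) (Fin χ) ℂ, rhoNorm ρ (transferMap A U v) ≤ rhoNorm ρ v := by
  intro v
  set V := blockColumn A
  have hV : Vᴴ * V = 1 := by rw [conjTranspose_blockColumn_mul_blockColumn, hA]
  have hT : transferMap A U v = Vᴴ * (U ⊗ₖ v) * V :=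
    (conjTranspose_blockColumn_mul_kronecker_mul_blockColumn A U v).symm
  have hUv : (U ⊗ₖ v)ᴴ * (U ⊗ₖ v) = 1 ⊗ₖ (vᴴ * v) := by
    rw [conjTranspose_kronecker, ← mul_kronecker_mul, ← star_eq_conjTranspose,
      Unitary.star_mul_self_of_mem hU]
  have hdiag : Vᴴ * ((1 : Matrix (Fin d) (Fin d) ℂ) ⊗ₖ (vᴴ * v)) * V = ∑ t, (A t)ᴴ * (vᴴ * v) * A t := by
    simp [V, conjTranspose_blockColumn_mul_kronecker_mul_blockColumn, one_apply, ite_smul]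
  have hle : ((transferMap A U v)ᴴ * transferMap A U v * ρ).trace ≤ (vᴴ * v * ρ).trace :=
    calc _ ≤ (Vᴴ * ((U ⊗ₖ v)ᴴ * (U ⊗ₖ v)) * V * ρ).trace :=
          hT ▸ trace_compression_sq_mul_le hV _ hρ.posSemidef
      _ = (∑ t, (A t)ᴴ * (vᴴ * v) * A t * ρ).trace := by rw [hUv, hdiag, Finset.sum_mul]
      _ = (vᴴ * v * ρ).trace := by rw [trace_sum_conjTranspose_mul_mul_mul, hfix]
  exact Real.sqrt_le_sqrt (Complex.le_def.mp hle).1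

theorem transfer_contraction {d χ : ℕ} (hd : 0 < d) (hχ : 0 < χ)
    (A : Fin d → Matrix (Fin χ) (Fin χ) ℂ)
    (hA : ∑ s, (A s)ᴴ * (A s) = 1)
    (ρ : Matrix (Fin χ) (Fin χ) ℂ) (hρ : ρ.PosDef)
    (hfix : ∑ s, A s * ρ * (A s)ᴴ = ρ)
    (U : Matrix (Fin d) (Fin d) ℂ) (hU : U ∈ Matrix.unitaryGroup (Fin d) ℂ) :
    ∀ v : Matrix (Fin χ) (Fin χ) ℂ, rhoNorm ρ (transferMap A U v) ≤ rhoNorm ρ v :=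
  transfer_contraction_general A hA ρ hρ hfix U hU
end

section
/- Let d, χ be positive integers, A : Fin d → Matrix (Fin χ) (Fin χ) ℂ a left-canonical MPS tensor with right fixed point ρ, and U ∈ Matrix (Fin d) (Fin d) ℂ unitary. Suppose v, w ∈ Matrix (Fin χ) (Fin χ) ℂ satisfy ‖v‖_ρ = 1, ‖w‖_ρ = 1, and T_U(v) = λ • w with |λ| = 1. Then: (a) the original transfer channel transports v onto w, i.e. ∑_t (A t)ᴴ * (vᴴ * v) * (A t) = wᴴ * w; and (b) for every unitary R ∈ Matrix (Fin d) (Fin d) ℂ with R * R = U there exists α ∈ ℂ with |α| = 1 such that for every index r, ∑_t (R r t) • (v * (A t)) = α • ∑_s (conj (R s r)) • ((A s) * w) (the weak push-through condition). -/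
open Matrix BigOperators
open scoped ComplexOrder

/-!
Put `X t = v * A t` and `Y s = A s * w`, and pair `d`-tuples of matrices by
`Tr(familyGram P Q * ρ)`, a ρ-weighted inner product. `X` and `Y` are unit vectors (by the
fixed-point equation for `ρ`, resp. by left-canonicity), mixing the index by a unitary is an
isometry, and `⟨Y, mixFamily U X⟩ = Tr(wᴴ T_U(v) ρ) = λ`. Cauchy–Schwarz is saturated, so
`mixFamily U X = λ • Y`. Part (a) compares the Gram matrices of both sides; part (b) applies
`Rᴴ`, since `Rᴴ * U = R`.
-/

open scoped MatrixOrder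

def mixFamily {ι κ M : Type*} [Fintype ι] [AddCommMonoid M] [Module ℂ M]
    (V : Matrix κ ι ℂ) (P : ι → M) : κ → M :=
  fun r => ∑ t, V r t • P t

section MixFamily

variable {ι κ ν M : Type*} [Fintype ι] [AddCommMonoid M] [Module ℂ M]

lemma mixFamily_mul [Fintype κ] (V : Matrix ν κ ℂ) (W : Matrix κ ι ℂ) (P : ι → M) :
    mixFamily (V * W) P = mixFamily V (mixFamily W P) := by
  funext r
  simp only [mixFamily, mul_apply, Finset.sum_smul, Finset.smul_sum, smul_smul]
  exact Finset.sum_comm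

lemma mixFamily_smul (V : Matrix κ ι ℂ) (c : ℂ) (P : ι → M) :
    mixFamily V (c • P) = c • mixFamily V P := by
  funext r
  simp only [mixFamily, Pi.smul_apply, Finset.smul_sum, smul_comm c]

end MixFamily

lemma star_mul_self_of_norm_eq_one {c : ℂ} (hc : ‖c‖ = 1) : star c * c = 1 := by
  rw [Complex.star_def, Complex.conj_mul', hc, Complex.ofReal_one, one_pow]

section FamilyGram

variable {ι m n : Type*} [Fintype ι] [Fintype m]

def familyGram (P Q : ι → Matrix m n ℂ) : Matrix n n ℂ :=
  ∑ r, (P r)ᴴ * Q r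

lemma conjTranspose_familyGram (P Q : ι → Matrix m n ℂ) :
    (familyGram P Q)ᴴ = familyGram Q P := by
  simp only [familyGram, conjTranspose_sum, conjTranspose_mul, conjTranspose_conjTranspose]

lemma familyGram_smul_left (c : ℂ) (P Q : ι → Matrix m n ℂ) :
    familyGram (c • P) Q = star c • familyGram P Q := by
  simp only [familyGram, Pi.smul_apply, conjTranspose_smul, smul_mul, Finset.smul_sum]

lemma familyGram_smul_right (c : ℂ) (P Q : ι → Matrix m n ℂ) :
    familyGram P (c • Q) = c • familyGram P Q := by
  simp only [familyGram, Pi.smul_apply, Matrix.mul_smul, Finset.smul_sum]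

lemma familyGram_sub_left (P P' Q : ι → Matrix m n ℂ) :
    familyGram (P - P') Q = familyGram P Q - familyGram P' Q := by
  simp only [familyGram, Pi.sub_apply, conjTranspose_sub, Matrix.sub_mul,
    Finset.sum_sub_distrib]

lemma familyGram_sub_right (P Q Q' : ι → Matrix m n ℂ) :
    familyGram P (Q - Q') = familyGram P Q - familyGram P Q' := by
  simp only [familyGram, Pi.sub_apply, Matrix.mul_sub, Finset.sum_sub_distrib]

lemma familyGram_mixFamily {κ : Type*} [Fintype κ] (V W : Matrix κ ι ℂ)
    (P Q : ι → Matrix m n ℂ) :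
    familyGram (mixFamily V P) (mixFamily W Q) =
      ∑ s, ∑ t, (Vᴴ * W) s t • ((P s)ᴴ * Q t) := by
  simp only [familyGram, mixFamily, conjTranspose_sum, conjTranspose_smul, Matrix.sum_mul,
    Matrix.mul_sum, Matrix.smul_mul, Matrix.mul_smul, Finset.smul_sum, smul_smul, mul_apply,
    conjTranspose_apply, Finset.sum_smul]
  rw [Finset.sum_comm_cycle]
  refine Finset.sum_congr rfl fun s _ => Finset.sum_comm.trans ?_
  simp only [mul_comm (W _ _)]

lemma familyGram_mixFamily_of_mem_unitaryGroup [DecidableEq ι] {V : Matrix ι ι ℂ}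
    (hV : V ∈ unitaryGroup ι ℂ) (P Q : ι → Matrix m n ℂ) :
    familyGram (mixFamily V P) (mixFamily V Q) = familyGram P Q := by
  rw [familyGram_mixFamily, ← star_eq_conjTranspose, mem_unitaryGroup_iff'.mp hV]
  simp [familyGram, one_apply, ite_smul]

variable [Fintype n] [DecidableEq n] {ρ : Matrix n n ℂ}

lemma eq_zero_of_trace_familyGram_mul_eq_zero (hρ : ρ.PosDef) {Z : ι → Matrix m n ℂ}
    (hZ : (familyGram Z Z * ρ).trace = 0) : Z = 0 := by
  obtain ⟨y, hy, rfl⟩ := (CStarAlgebra.isStrictlyPositive_iff_eq_star_mul_self (a := ρ)).mp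
    hρ.isStrictlyPositive
  have hcycle : ∀ r,
      ((Z r)ᴴ * Z r * (star y * y)).trace = ((Z r * yᴴ)ᴴ * (Z r * yᴴ)).trace := by
    intro r
    rw [star_eq_conjTranspose, conjTranspose_mul, conjTranspose_conjTranspose, ← Matrix.mul_assoc,
      trace_mul_comm]
    simp only [Matrix.mul_assoc]
  simp only [familyGram, Finset.sum_mul, trace_sum, hcycle] at hZ
  rw [Finset.sum_eq_zero_iff_of_nonneg fun r _ =>
    (posSemidef_conjTranspose_mul_self _).trace_nonneg] at hZ
  funext r
  have hZy := trace_conjTranspose_mul_self_eq_zero_iff.mp (hZ r (Finset.mem_univ r))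
  have hdet : IsUnit yᴴ.det := (isUnit_iff_isUnit_det _).mp hy.star
  simpa [Matrix.mul_nonsing_inv_cancel_right _ _ hdet] using congrArg (· * yᴴ⁻¹) hZy

omit [DecidableEq n] in
lemma trace_conjTranspose_mul_of_isHermitian (hρ : ρ.IsHermitian) (M : Matrix n n ℂ) :
    (Mᴴ * ρ).trace = star (M * ρ).trace := by
  rw [← trace_conjTranspose, conjTranspose_mul, hρ.eq, trace_mul_comm]

lemma eq_smul_of_trace_familyGram_mul (hρ : ρ.PosDef) {P Q : ι → Matrix m n ℂ} {c : ℂ}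
    (hc : ‖c‖ = 1) (hP : (familyGram P P * ρ).trace = 1) (hQ : (familyGram Q Q * ρ).trace = 1)
    (hQP : (familyGram Q P * ρ).trace = c) : P = c • Q := by
  have hPQ : (familyGram P Q * ρ).trace = star c := by
    rw [← conjTranspose_familyGram, trace_conjTranspose_mul_of_isHermitian hρ.isHermitian, hQP]
  rw [← sub_eq_zero]
  -- the squared ρ-norm of `P - c • Q` is `1 - |c|²`
  refine eq_zero_of_trace_familyGram_mul_eq_zero hρ ?_
  rw [familyGram_sub_left, familyGram_sub_right, familyGram_sub_right, familyGram_smul_left,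
    familyGram_smul_right, familyGram_smul_left, familyGram_smul_right]
  simp only [sub_mul, smul_mul, trace_sub, trace_smul, hP, hQ, hPQ, hQP, smul_eq_mul]
  linear_combination -star_mul_self_of_norm_eq_one hc

end FamilyGram

section TransferChannel

variable {ι n : Type*} [Fintype ι] [Fintype n] (A : ι → Matrix n n ℂ)

lemma familyGram_mul_const (w w' : Matrix n n ℂ) :
    familyGram (fun s => A s * w) (fun s => A s * w') = wᴴ * (∑ s, (A s)ᴴ * A s) * w' := by
  simp only [familyGram, conjTranspose_mul, Matrix.mul_sum, Matrix.sum_mul, Matrix.mul_assoc]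

lemma familyGram_const_mul (v v' : Matrix n n ℂ) :
    familyGram (fun t => v * A t) (fun t => v' * A t) = ∑ t, (A t)ᴴ * (vᴴ * v') * A t := by
  simp only [familyGram, conjTranspose_mul, Matrix.mul_assoc]

variable {A} {ρ : Matrix n n ℂ}

lemma trace_sum_conjTranspose_mul_mul_mul (hfix : ∑ s, A s * ρ * (A s)ᴴ = ρ)
    (M : Matrix n n ℂ) : ((∑ t, (A t)ᴴ * M * A t) * ρ).trace = (M * ρ).trace := by
  conv_rhs => rw [← hfix]
  simp only [Matrix.sum_mul, Matrix.mul_sum, trace_sum, Matrix.mul_assoc]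
  refine Finset.sum_congr rfl fun t _ => ?_
  rw [trace_mul_comm]
  simp only [Matrix.mul_assoc]

end TransferChannel

lemma familyGram_mixFamily_eq_mul_transferMap {d χ : ℕ}
    (A : Fin d → Matrix (Fin χ) (Fin χ) ℂ) (U : Matrix (Fin d) (Fin d) ℂ)
    (v w : Matrix (Fin χ) (Fin χ) ℂ) :
    familyGram (fun s => A s * w) (mixFamily U fun t => v * A t) = wᴴ * transferMap A U v := by
  simp only [familyGram, mixFamily, transferMap, conjTranspose_mul, Matrix.mul_sum,
    Matrix.mul_smul, Matrix.mul_assoc]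

lemma trace_conjTranspose_mul_mul_eq_rhoNorm_sq {χ : ℕ} {ρ : Matrix (Fin χ) (Fin χ) ℂ}
    (hρ : ρ.PosSemidef) (v : Matrix (Fin χ) (Fin χ) ℂ) :
    (vᴴ * v * ρ).trace = ((rhoNorm ρ v ^ 2 : ℝ) : ℂ) := by
  have hnonneg : 0 ≤ (vᴴ * v * ρ).trace := by
    rw [Matrix.mul_assoc, trace_mul_comm]
    exact (hρ.mul_mul_conjTranspose_same v).trace_nonneg
  obtain ⟨hre, him⟩ := Complex.nonneg_iff.mp hnonneg
  rw [rhoNorm, Real.sq_sqrt hre]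
  exact Complex.ext rfl him.symm

theorem transfer_saturation_weak_pushthrough_general {d χ : ℕ}
    (A : Fin d → Matrix (Fin χ) (Fin χ) ℂ)
    (hA : ∑ s, (A s)ᴴ * (A s) = 1)
    (ρ : Matrix (Fin χ) (Fin χ) ℂ) (hρ : ρ.PosDef)
    (hfix : ∑ s, A s * ρ * (A s)ᴴ = ρ)
    (U : Matrix (Fin d) (Fin d) ℂ) (hU : U ∈ Matrix.unitaryGroup (Fin d) ℂ)
    (v w : Matrix (Fin χ) (Fin χ) ℂ)
    (hv : rhoNorm ρ v = 1) (hw : rhoNorm ρ w = 1)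
    (lam : ℂ) (hlam : transferMap A U v = lam • w)
    (hmod : ‖lam‖ = 1) :
    (∑ t, (A t)ᴴ * (vᴴ * v) * (A t) = wᴴ * w) ∧
    (∀ R : Matrix (Fin d) (Fin d) ℂ, R ∈ Matrix.unitaryGroup (Fin d) ℂ → R * R = U →
      ∃ α : ℂ, ‖α‖ = 1 ∧
        ∀ r : Fin d,
          ∑ t, (R r t) • (v * A t) =
            α • ∑ s, (starRingEnd ℂ (R s r)) • (A s * w)) := by
  set X : Fin d → Matrix (Fin χ) (Fin χ) ℂ := fun t => v * A t
  set Y : Fin d → Matrix (Fin χ) (Fin χ) ℂ := fun s => A s * w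
  have hv1 : (vᴴ * v * ρ).trace = 1 := by
    rw [trace_conjTranspose_mul_mul_eq_rhoNorm_sq hρ.posSemidef, hv]; norm_num
  have hw1 : (wᴴ * w * ρ).trace = 1 := by
    rw [trace_conjTranspose_mul_mul_eq_rhoNorm_sq hρ.posSemidef, hw]; norm_num
  have hY : familyGram Y Y = wᴴ * w := by rw [familyGram_mul_const, hA, Matrix.mul_one]
  have hUX : mixFamily U X = lam • Y := by
    refine eq_smul_of_trace_familyGram_mul hρ hmod ?_ (by rw [hY, hw1]) ?_
    · rw [familyGram_mixFamily_of_mem_unitaryGroup hU, familyGram_const_mul,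
        trace_sum_conjTranspose_mul_mul_mul hfix, hv1]
    · rw [familyGram_mixFamily_eq_mul_transferMap, hlam, Matrix.mul_smul, Matrix.smul_mul,
        trace_smul, hw1, smul_eq_mul, mul_one]
  refine ⟨?_, fun R hR hRR => ⟨lam, hmod, fun r => ?_⟩⟩
  · rw [← familyGram_const_mul, ← familyGram_mixFamily_of_mem_unitaryGroup hU, hUX,
      familyGram_smul_left, familyGram_smul_right, smul_smul, star_mul_self_of_norm_eq_one hmod,
      one_smul, hY]
  · have hRX : mixFamily R X = lam • mixFamily Rᴴ Y := by
      rw [← mixFamily_smul, ← hUX, ← mixFamily_mul, ← hRR, ← Matrix.mul_assoc,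
        ← star_eq_conjTranspose, mem_unitaryGroup_iff'.mp hR, Matrix.one_mul]
    simpa only [mixFamily, X, Y, Pi.smul_apply, conjTranspose_apply, Complex.star_def] using
      congrFun hRX r

/-- Saturation of the eigenvalue bound forces (a) transport of `vᴴv` onto `wᴴw` by the
ordinary transfer channel and (b) the weak push-through condition. -/
theorem transfer_saturation_weak_pushthrough {d χ : ℕ} (hd : 0 < d) (hχ : 0 < χ)
    (A : Fin d → Matrix (Fin χ) (Fin χ) ℂ)
    (hA : ∑ s, (A s)ᴴ * (A s) = 1)
    (ρ : Matrix (Fin χ) (Fin χ) ℂ) (hρ : ρ.PosDef)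
    (hfix : ∑ s, A s * ρ * (A s)ᴴ = ρ)
    (U : Matrix (Fin d) (Fin d) ℂ) (hU : U ∈ Matrix.unitaryGroup (Fin d) ℂ)
    (v w : Matrix (Fin χ) (Fin χ) ℂ)
    (hv : rhoNorm ρ v = 1) (hw : rhoNorm ρ w = 1)
    (lam : ℂ) (hlam : transferMap A U v = lam • w)
    (hmod : ‖lam‖ = 1) :
    (∑ t, (A t)ᴴ * (vᴴ * v) * (A t) = wᴴ * w) ∧
    (∀ R : Matrix (Fin d) (Fin d) ℂ, R ∈ Matrix.unitaryGroup (Fin d) ℂ → R * R = U →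
      ∃ α : ℂ, ‖α‖ = 1 ∧
        ∀ r : Fin d,
          ∑ t, (R r t) • (v * A t) =
            α • ∑ s, (starRingEnd ℂ (R s r)) • (A s * w)) :=
  transfer_saturation_weak_pushthrough_general A hA ρ hρ hfix U hU v w hv hw lam hlam hmod
end

section
/- Let N ≥ 1, let a, b, k be natural numbers, and let ζ : ZMod N → ℂ be the character ζ(m) = exp(2πi·m̃/N) for any integer lift m̃. Define linear operators on functions f : (ZMod N) × (ZMod N) → ℂ by (U_a f)(s₁, s₂) = ζ(−k·(s₁ − a·s₂))·f(s₁, s₂) and (U_b f)(s₁, s₂) = f(s₁ − 1, s₂ − b). Then U_a ∘ U_b = ζ(k·(a·b − 1)) • (U_b ∘ U_a). In particular U_a and U_b commute if and only if N ∣ k·(a·b − 1). -/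
/-- The character `ζ(m) = exp(2πi·m̃/N)` of `ZMod N`, computed from the canonical lift. -/
noncomputable def zeta (N : ℕ) (m : ZMod N) : ℂ :=
  Complex.exp (2 * Real.pi * Complex.I * (m.val : ℂ) / (N : ℂ))


lemma zeta_pow (N : ℕ) (m : ZMod N) :
    zeta N m = Complex.exp (2 * Real.pi * Complex.I / N) ^ m.val := by
  rw [zeta, ← Complex.exp_nat_mul]; ring_nf

lemma zeta_add (N : ℕ) (hN : N ≠ 0) (x y : ZMod N) :
    zeta N (x + y) = zeta N x * zeta N y := by
  haveI : NeZero N := ⟨hN⟩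
  have hc : Complex.exp (2 * Real.pi * Complex.I / N) ^ N = 1 :=
    (Complex.isPrimitiveRoot_exp N hN).pow_eq_one
  rw [zeta_pow, zeta_pow, zeta_pow, ← pow_add, ZMod.val_add, ← pow_eq_pow_mod _ hc]

lemma zeta_eq_one_iff (N : ℕ) (hN : N ≠ 0) (x : ZMod N) :
    zeta N x = 1 ↔ x = 0 := by
  haveI : NeZero N := ⟨hN⟩
  rw [zeta_pow, (Complex.isPrimitiveRoot_exp N hN).pow_eq_one_iff_dvd]
  constructor
  · intro h
    have hv : x.val = 0 := by
      rcases Nat.lt_or_ge x.val 1 with h1 | h1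
      · omega
      · exact absurd (Nat.le_of_dvd (by omega) h) (by have := x.val_lt; omega)
    exact (ZMod.val_eq_zero x).mp hv
  · intro h; simp [h]

lemma zeta_ne_zero (N : ℕ) (x : ZMod N) : zeta N x ≠ 0 := Complex.exp_ne_zero _

/-- The on-site operator `U_a`: `(U_a f)(s₁,s₂) = ζ(−k(s₁ − a·s₂))·f(s₁,s₂)`. -/
noncomputable def Uonsite_a (N a k : ℕ) (f : ZMod N × ZMod N → ℂ) :
    ZMod N × ZMod N → ℂ :=
  fun s => zeta N (-(k : ZMod N) * (s.1 - (a : ZMod N) * s.2)) * f s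

/-- The on-site operator `U_b`: `(U_b f)(s₁,s₂) = f(s₁ − 1, s₂ − b)`. -/
def Uonsite_b (N b : ℕ) (f : ZMod N × ZMod N → ℂ) : ZMod N × ZMod N → ℂ :=
  fun s => f (s.1 - 1, s.2 - (b : ZMod N))

/-- The on-site operators of the exponential SPT representative obey
`U_a ∘ U_b = ζ(k(ab−1)) • (U_b ∘ U_a)`; in particular they commute iff
`N ∣ k(ab−1)`. -/
theorem onsite_commutation (N : ℕ) (hN : 1 ≤ N) (a b k : ℕ) :
    (Uonsite_a N a k ∘ Uonsite_b N b =
      zeta N ((k : ZMod N) * ((a : ZMod N) * (b : ZMod N) - 1)) •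
        (Uonsite_b N b ∘ Uonsite_a N a k)) ∧
    ((Uonsite_a N a k ∘ Uonsite_b N b = Uonsite_b N b ∘ Uonsite_a N a k) ↔
      (N : ℤ) ∣ (k : ℤ) * ((a : ℤ) * (b : ℤ) - 1)) := by
  have hN0 : N ≠ 0 := by omega
  set z := zeta N ((k : ZMod N) * ((a : ZMod N) * (b : ZMod N) - 1)) with hz
  have key : Uonsite_a N a k ∘ Uonsite_b N b =
      z • (Uonsite_b N b ∘ Uonsite_a N a k) := by
    funext f s
    simp only [Function.comp_apply, Uonsite_a, Uonsite_b, Pi.smul_apply, smul_eq_mul]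
    rw [hz, ← mul_assoc, ← zeta_add N hN0]
    congr 2
    ring
  refine ⟨key, ?_⟩
  have hziff : (Uonsite_a N a k ∘ Uonsite_b N b = Uonsite_b N b ∘ Uonsite_a N a k) ↔ z = 1 := by
    constructor
    · intro h
      have h2 := congrFun (congrFun (key.symm.trans h) (fun _ => 1)) (0, 0)
      simp only [Pi.smul_apply, smul_eq_mul, Function.comp_apply, Uonsite_a, Uonsite_b,
        mul_one] at h2
      exact mul_right_cancel₀ (zeta_ne_zero N _) (h2.trans (one_mul _).symm)
    · intro h; rw [key, h, one_smul]
  rw [hziff, hz, zeta_eq_one_iff N hN0]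
  have : ((k : ZMod N) * ((a : ZMod N) * (b : ZMod N) - 1)) =
      (((k : ℤ) * ((a : ℤ) * (b : ℤ) - 1) : ℤ) : ZMod N) := by push_cast; ring
  rw [this, ZMod.intCast_zmod_eq_zero_iff_dvd]
end

section
/- Let N ≥ 1, let a, b, k be natural numbers, let ζ : ZMod N → ℂ be the character ζ(m) = exp(2πi·m̃/N), and work in Matrix (ZMod N) (ZMod N) ℂ. Let Z be the clock matrix (diagonal with Z j j = ζ(j)), X the shift matrix with entries X i j = 1 if i = j − 1 and 0 otherwise, and E_{s₁,s₂} the matrix unit (entry 1 at position (s₁,s₂), 0 elsewhere). Then for all s₁, s₂ ∈ ZMod N: (i) (Z^k)ᴴ * E_{s₁,s₂} * (Z^k)^a = ζ(−k·s₁ + k·a·s₂) • E_{s₁,s₂}; and (ii) Xᴴ * E_{s₁,s₂} * X^b = E_{s₁+1, s₂+b}. -/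
open Matrix
/-- The clock matrix: diagonal with entries `ζ(j)`. -/
noncomputable def clockZ (N : ℕ) [NeZero N] : Matrix (ZMod N) (ZMod N) ℂ :=
  Matrix.diagonal fun j => zeta N j

/-- The shift matrix: `X i j = 1` if `i = j − 1` and `0` otherwise. -/
def shiftX (N : ℕ) [NeZero N] : Matrix (ZMod N) (ZMod N) ℂ :=
  Matrix.of fun i j => if i = j - 1 then 1 else 0

/-!
`ζ` is Mathlib's standard additive character `ZMod.stdAddChar`, so the powers of the clock
matrix are diagonal with character entries, and conjugating a matrix unit `E_{s₁,s₂}` by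
diagonal matrices only rescales it by `conj (ζ (k s₁)) · ζ (k a s₂)`. The shift matrix is the
permutation matrix of `j ↦ j + 1`, and permutation matrices act on matrix units by moving
their row and column indices: `P_σᴴ E_{i,j} P_τ = E_{σ i, τ j}`.
-/

namespace Matrix

variable {n α : Type*} [Fintype n] [DecidableEq n]

theorem diagonal_mul_single_mul_diagonal [NonUnitalNonAssocSemiring α] (d e : n → α) (i j : n)
    (c : α) : diagonal d * single i j c * diagonal e = single i j (d i * c * e j) := by
  ext i' j'
  rw [mul_diagonal, diagonal_mul, single_apply, single_apply]
  split_ifs with h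
  · rw [h.1, h.2]
  · rw [mul_zero, zero_mul]

theorem permMatrix_mul_single_mul_permMatrix [NonAssocSemiring α] (σ τ : Equiv.Perm n)
    (i j : n) (c : α) :
    σ.permMatrix α * single i j c * τ.permMatrix α = single (σ.symm i) (τ j) c := by
  rw [PEquiv.toMatrix_toPEquiv_mul, PEquiv.mul_toMatrix_toPEquiv, submatrix_submatrix]
  exact submatrix_single_equiv σ τ.symm i j c

theorem permMatrix_pow [Semiring α] (σ : Equiv.Perm n) (m : ℕ) :
    (σ ^ m).permMatrix α = σ.permMatrix α ^ m := by
  induction m with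
  | zero => rw [pow_zero, pow_zero, permMatrix_one]
  | succ m ih => rw [pow_succ', permMatrix_mul, ih, pow_succ]

end Matrix

section

variable (N : ℕ) [NeZero N]

theorem zeta_eq_stdAddChar : zeta N = ZMod.stdAddChar := by
  funext m
  rw [ZMod.stdAddChar_apply, ZMod.toCircle_apply]
  rfl

theorem clockZ_pow (m : ℕ) : clockZ N ^ m = diagonal fun j => zeta N (m * j) := by
  rw [clockZ, diagonal_pow, zeta_eq_stdAddChar]
  congr 1
  funext j
  rw [Pi.pow_apply, ← AddChar.map_nsmul_eq_pow, nsmul_eq_mul]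

theorem shiftX_eq_permMatrix : shiftX N = (Equiv.addRight (1 : ZMod N)).permMatrix ℂ := by
  ext i j
  simp [shiftX, PEquiv.toMatrix_apply, eq_sub_iff_add_eq]

theorem shiftX_pow (m : ℕ) : shiftX N ^ m = (Equiv.addRight (m : ZMod N)).permMatrix ℂ := by
  rw [shiftX_eq_permMatrix, ← permMatrix_pow, Equiv.nsmul_addRight, nsmul_one]

end

/-- Generalized push-through relations for the exponential SPT MPS representative
`A^{s₁,s₂} = E_{s₁,s₂}` with bond unitaries `Z^k` (exponents 1 and a) and
`X` (exponents 1 and b). -/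
theorem exponential_SPT_pushthrough (N : ℕ) [NeZero N] (a b k : ℕ)
    (s₁ s₂ : ZMod N) :
    ((clockZ N ^ k)ᴴ * Matrix.single s₁ s₂ (1 : ℂ) * (clockZ N ^ k) ^ a =
      zeta N (-(k : ZMod N) * s₁ + (k : ZMod N) * (a : ZMod N) * s₂) •
        Matrix.single s₁ s₂ (1 : ℂ)) ∧
    ((shiftX N)ᴴ * Matrix.single s₁ s₂ (1 : ℂ) * (shiftX N) ^ b =
      Matrix.single (s₁ + 1) (s₂ + (b : ZMod N)) (1 : ℂ)) := by
  constructor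
  · rw [← pow_mul, clockZ_pow, clockZ_pow, diagonal_conjTranspose,
      diagonal_mul_single_mul_diagonal, smul_single, smul_eq_mul, mul_one, mul_one]
    congr 1
    rw [Pi.star_apply, zeta_eq_stdAddChar, AddChar.map_add_eq_mul, neg_mul,
      AddChar.map_neg_eq_conj, Nat.cast_mul, Complex.star_def]
  · rw [shiftX_pow, shiftX_eq_permMatrix, conjTranspose_permMatrix,
      permMatrix_mul_single_mul_permMatrix]
    rfl
end

section
/- Let n ≥ 1, let P, Q ∈ Matrix (Fin n) (Fin n) ℂ be invertible, let ω, c ∈ ℂ be nonzero, and let k ≥ 1 be a natural number. If P * Q = ω • (Q * P) and P^k = c • Q^k, then ω^k = 1 (and in particular ω^{k²} = 1). -/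
/-- Extra constraint from an unfaithful charge–exponential representation: if invertible
matrices satisfy `P Q = ω Q P` and `P^k = c Q^k`, then `ω^k = 1` (hence `ω^{k²} = 1`). -/
theorem unfaithful_phase_constraint (n : ℕ) (hn : 1 ≤ n)
    (P Q : Matrix (Fin n) (Fin n) ℂ) (hP : IsUnit P) (hQ : IsUnit Q)
    (ω c : ℂ) (hω : ω ≠ 0) (hc : c ≠ 0) (k : ℕ) (hk : 1 ≤ k)
    (hcomm : P * Q = ω • (Q * P)) (hpow : P ^ k = c • Q ^ k) :
    ω ^ k = 1 ∧ ω ^ (k ^ 2) = 1 := by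
  haveI : Nonempty (Fin n) := ⟨⟨0, hn⟩⟩
  -- P^m * Q = ω^m • (Q * P^m)
  have key : ∀ m : ℕ, P ^ m * Q = ω ^ m • (Q * P ^ m) := by
    intro m
    induction m with
    | zero => simp
    | succ m ih =>
      calc P ^ (m + 1) * Q = P ^ m * (P * Q) := by rw [pow_succ, mul_assoc]
        _ = P ^ m * (ω • (Q * P)) := by rw [hcomm]
        _ = ω • (P ^ m * Q * P) := by rw [Matrix.mul_smul, mul_assoc]
        _ = ω • ((ω ^ m • (Q * P ^ m)) * P) := by rw [ih]
        _ = ω ^ (m + 1) • (Q * P ^ (m + 1)) := by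
            rw [Matrix.smul_mul, smul_smul, pow_succ, mul_assoc]
            rw [pow_succ]; ring_nf
  have h1 : c • Q ^ (k + 1) = (ω ^ k * c) • Q ^ (k + 1) := by
    calc c • Q ^ (k + 1) = (c • Q ^ k) * Q := by
          rw [Matrix.smul_mul, pow_succ]
      _ = P ^ k * Q := by rw [hpow]
      _ = ω ^ k • (Q * P ^ k) := key k
      _ = ω ^ k • (Q * (c • Q ^ k)) := by rw [hpow]
      _ = (ω ^ k * c) • Q ^ (k + 1) := by
          rw [Matrix.mul_smul, smul_smul, pow_succ']
  have hQk : Q ^ (k + 1) ≠ 0 := (hQ.pow (k + 1)).ne_zero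
  have hsub : (c - ω ^ k * c) • Q ^ (k + 1) = 0 := by
    rw [sub_smul, h1, sub_self]
  have : c - ω ^ k * c = 0 := by
    rcases smul_eq_zero.mp hsub with h | h
    · exact h
    · exact absurd h hQk
  have hωk : ω ^ k = 1 := by
    have h2 : c * (1 - ω ^ k) = 0 := by linear_combination this
    rcases mul_eq_zero.mp h2 with h | h
    · exact absurd h hc
    · exact (sub_eq_zero.mp h).symm
  exact ⟨hωk, by rw [pow_two, pow_mul, hωk, one_pow]⟩
end

section
/- Let N ≥ 1, L ≥ 2 be integers and let b be an integer. In the additive group (ZMod N)^L (functions Fin L → ZMod N), let u be the constant tuple with every component equal to 1, and let e be the tuple whose j-th component is (b^{j} : ZMod N) for j = 0, …, L−1 (i.e. e j = b^j). Then the subgroup generated by {u, e} is isomorphic, as an additive group, to ZMod N × ZMod (N / Int.gcd (b − 1) N). -/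
/-!
Put `v = e - u`, so that `{u, e}` and `{u, v}` generate the same subgroup. Since `v₀ = 0` while
every nonzero multiple of `u` is nowhere zero, `⟨u⟩ ∩ ⟨v⟩ = 0` and the subgroup is the internal
direct sum `⟨u⟩ ⊕ ⟨v⟩ ≅ ℤ_{ord u} × ℤ_{ord v}`. Clearly `ord u = N`. As
`b^j - 1 = (b - 1)(1 + ⋯ + b^{j-1})`, `v` is `b - 1` times a tuple with entry `1` at `j = 1`,
so `ord v = ord (b - 1) = N / gcd(b - 1, N)`.
-/

open Finset AddSubgroup

noncomputable def AddSubgroup.zmodAddEquivZMultiples {G : Type*} [AddGroup G] (g : G) :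
    ZMod (addOrderOf g) ≃+ zmultiples g :=
  zmodAddEquivOfGenerator (g := ⟨g, mem_zmultiples g⟩)
    (by rintro ⟨_, k, rfl⟩; exact ⟨k, Subtype.ext rfl⟩) (Nat.card_zmultiples g)

namespace AddSubgroup

variable {G : Type*} [AddCommGroup G]

theorem closure_pair_sub (a b : G) : closure {a, b - a} = closure {a, b} := by
  have fst (c : G) : a ∈ closure {a, c} := subset_closure (Set.mem_insert a _)
  have snd (c : G) : c ∈ closure {a, c} := subset_closure (Set.mem_insert_of_mem a rfl)
  apply le_antisymm <;> rw [closure_le, Set.insert_subset_iff, Set.singleton_subset_iff]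
  · exact ⟨fst b, sub_mem (snd b) (fst b)⟩
  · exact ⟨fst _, by simpa using add_mem (snd (b - a)) (fst _)⟩

theorem range_subtype_coprod_subtype (H K : AddSubgroup G) :
    (H.subtype.coprod K.subtype).range = H ⊔ K := by
  ext x
  simp [mem_sup, eq_comm]

noncomputable def prodAddEquivSupOfDisjoint {H K : AddSubgroup G} (h : Disjoint H K) :
    H × K ≃+ (H ⊔ K : AddSubgroup G) :=
  (AddMonoidHom.ofInjective (f := H.subtype.coprod K.subtype) (add_injective_of_disjoint h)).trans
    (AddEquiv.addSubgroupCongr (range_subtype_coprod_subtype H K))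

noncomputable def closurePairAddEquivOfDisjoint {a b : G}
    (h : Disjoint (zmultiples a) (zmultiples b)) :
    closure {a, b} ≃+ ZMod (addOrderOf a) × ZMod (addOrderOf b) :=
  (AddEquiv.addSubgroupCongr (by rw [← Set.singleton_union, AddSubgroup.closure_union,
      zmultiples_eq_closure, zmultiples_eq_closure])).trans <|
    (prodAddEquivSupOfDisjoint h).symm.trans
      ((zmodAddEquivZMultiples a).prodCongr (zmodAddEquivZMultiples b)).symm

end AddSubgroup

theorem ZMod.addOrderOf_intCast (a : ℤ) {n : ℕ} (hn : n ≠ 0) :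
    addOrderOf (a : ZMod n) = n / Int.gcd a n := by
  obtain ⟨k, rfl | rfl⟩ := Int.eq_nat_or_neg a <;>
    simp [ZMod.addOrderOf_coe _ hn, Int.gcd, Nat.gcd_comm]

theorem addOrderOf_smul_of_apply_eq_one {ι R : Type*} [Ring R] {g : ι → R} {i : ι}
    (hg : g i = 1) (c : R) : addOrderOf (c • g) = addOrderOf c :=
  addOrderOf_injective (LinearMap.toSpanSingleton R _ g).toAddMonoidHom
    (fun r s h => by simpa [hg] using congrFun h i) c

theorem disjoint_zmultiples_one_of_apply_eq_zero {ι R : Type*} [Ring R] {v : ι → R} {i : ι}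
    (hv : v i = 0) :
    Disjoint (zmultiples (1 : ι → R)) (zmultiples v) := by
  rw [disjoint_def]
  rintro _ ⟨k, rfl⟩ ⟨l, hl⟩
  have hk : k • (1 : R) = 0 := by simpa [hv] using (congrFun hl i).symm
  ext j
  simpa using hk

/-- When a global `ℤ_N` charge symmetry (tuple `u = (1,…,1)`) and a `ℤ_N` exponential
symmetry of exponent `b` (tuple `e = (1, b, b², …, b^{L−1})`) are embedded in a single
on-site `ℤ_N`, the group of modulated symmetry operators they generate is
`ℤ_N × ℤ_{N/gcd(b−1,N)}`. -/
theorem charge_exponential_generated_group (N L : ℕ) (hN : 1 ≤ N) (hL : 2 ≤ L)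
    (b : ℤ) (u e : Fin L → ZMod N)
    (hu : ∀ j : Fin L, u j = 1)
    (he : ∀ j : Fin L, e j = ((b : ZMod N)) ^ (j : ℕ)) :
    Nonempty ((AddSubgroup.closure {u, e} : AddSubgroup (Fin L → ZMod N)) ≃+
      (ZMod N × ZMod (N / Int.gcd (b - 1) N))) := by
  obtain rfl : u = 1 := funext hu
  set g : Fin L → ZMod N := fun j => ∑ i ∈ range j, (b : ZMod N) ^ i
  have he_sub : e - 1 = ((b - 1 : ℤ) : ZMod N) • g := by
    ext j
    simp [g, he, mul_comm, geom_sum_mul]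
  have hg : g ⟨1, hL⟩ = 1 := by simp [g]
  have hdisj : Disjoint (zmultiples 1) (zmultiples (e - 1)) :=
    disjoint_zmultiples_one_of_apply_eq_zero (i := ⟨0, by omega⟩) (by simp [he])
  have hN0 : N ≠ 0 := by omega
  have hord_one : addOrderOf (1 : Fin L → ZMod N) = N := by
    rw [← one_smul (ZMod N) 1, addOrderOf_smul_of_apply_eq_one (i := ⟨0, by omega⟩) rfl,
      ZMod.addOrderOf_one]
  have hord_sub : addOrderOf (e - 1) = N / Int.gcd (b - 1) N := by
    rw [he_sub, addOrderOf_smul_of_apply_eq_one hg, ZMod.addOrderOf_intCast _ hN0]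
  exact ⟨(AddEquiv.addSubgroupCongr (closure_pair_sub 1 e).symm).trans <|
    (closurePairAddEquivOfDisjoint hdisj).trans <|
      (ZMod.ringEquivCongr hord_one).toAddEquiv.prodCongr
        (ZMod.ringEquivCongr hord_sub).toAddEquiv⟩
end

section
/- Let χ ≥ 1, N ≥ 1 and n be an integer. Suppose there exist invertible matrices v_q, v_{d,0}, v_{d,1} ∈ Matrix (Fin χ) (Fin χ) ℂ, a nonzero scalar c ∈ ℂ, and scalars μ₀, μ₁ ∈ ℂ such that v_{d,1} = c • (v_{d,0} * v_q), v_q * v_{d,0} = μ₀ • (v_{d,0} * v_q), v_q * v_{d,1} = μ₁ • (v_{d,1} * v_q), and μ₁ = exp(2πi·n/N)·μ₀. Then N ∣ n. (Hence for dipole symmetry with nontrivial on-site projective class n ≢ 0 (mod N), no symmetric injective MPS exists: the dipole LSM theorem.) -/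
/-!
Pushing `v_q` through `v_{d,1} = c • (v_{d,0} v_q)` shows that `v_{d,1}` has the same commutator
phase with `v_q` as `v_{d,0}`, i.e. `μ₁ = μ₀`. The phase is nonzero because `v_q v_{d,1}` is
invertible, so the matching condition `μ₁ = exp(2πin/N) μ₀` forces `exp(2πin/N) = 1`.
-/

open Complex Real

theorem Complex.exp_two_pi_mul_I_mul_int_div_eq_one_iff {k : ℤ} {N : ℕ} (hN : N ≠ 0) :
    exp (2 * π * I * k / N) = 1 ↔ (N : ℤ) ∣ k := by
  rw [exp_eq_one_iff]
  conv in _ = _ => rw [← mul_comm (2 * π * I), mul_div_assoc, mul_right_inj' (by simp)]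
  field_simp [Nat.cast_ne_zero.mpr hN]
  norm_cast

theorem mul_smul_mul_eq_of_twisted_commute {R A : Type*} [CommSemiring R] [Semiring A]
    [Algebra R A] {q d : A} {μ : R} (c : R)
    (h : q * d = μ • (d * q)) :
    q * (c • (d * q)) = μ • (c • (d * q) * q) := by
  rw [mul_smul_comm, ← mul_assoc, h, smul_mul_assoc, smul_mul_assoc, smul_comm]

theorem dipole_LSM_general (χ N : ℕ) (hχ : 1 ≤ χ) (hN : 1 ≤ N) (n : ℤ)
    (vq vd0 vd1 : Matrix (Fin χ) (Fin χ) ℂ)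
    (hq : IsUnit vq) (hd1 : IsUnit vd1)
    (c : ℂ) (μ0 μ1 : ℂ)
    (h1 : vd1 = c • (vd0 * vq))
    (h2 : vq * vd0 = μ0 • (vd0 * vq))
    (h3 : vq * vd1 = μ1 • (vd1 * vq))
    (h4 : μ1 = Complex.exp (2 * Real.pi * Complex.I * (n : ℂ) / (N : ℂ)) * μ0) :
    (N : ℤ) ∣ n := by
  have : NeZero χ := ⟨by omega⟩
  have hμ : μ1 = μ0 := smul_left_injective ℂ (hd1.mul hq).ne_zero <| by
    change μ1 • (vd1 * vq) = μ0 • (vd1 * vq)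
    rw [← h3, h1, mul_smul_mul_eq_of_twisted_commute c h2]
  have hμ1 : μ1 ≠ 0 := left_ne_zero_of_smul (h3 ▸ (hq.mul hd1).ne_zero)
  rw [hμ] at h4 hμ1
  rw [← exp_two_pi_mul_I_mul_int_div_eq_one_iff (by omega)]
  exact (mul_eq_right₀ hμ1).mp h4.symm

/-- Dipole LSM theorem: if bond unitaries implement the dipole push-through structure
`v_{d,1} ≐ v_{d,0} v_q` with commutator phases `μ₀, μ₁` satisfying the physical–virtual
matching `μ₁ = exp(2πin/N)·μ₀`, then `N ∣ n`; hence for a nontrivial on-site projective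
class no symmetric injective MPS exists. -/
theorem dipole_LSM (χ N : ℕ) (hχ : 1 ≤ χ) (hN : 1 ≤ N) (n : ℤ)
    (vq vd0 vd1 : Matrix (Fin χ) (Fin χ) ℂ)
    (hq : IsUnit vq) (hd0 : IsUnit vd0) (hd1 : IsUnit vd1)
    (c : ℂ) (hc : c ≠ 0) (μ0 μ1 : ℂ)
    (h1 : vd1 = c • (vd0 * vq))
    (h2 : vq * vd0 = μ0 • (vd0 * vq))
    (h3 : vq * vd1 = μ1 • (vd1 * vq))
    (h4 : μ1 = Complex.exp (2 * Real.pi * Complex.I * (n : ℂ) / (N : ℂ)) * μ0) :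
    (N : ℤ) ∣ n :=
  dipole_LSM_general χ N hχ hN n vq vd0 vd1 hq hd1 c μ0 μ1 h1 h2 h3 h4
end
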